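/- Let γ ∈ (0,1), let P ∈ ℝ^{D×D} be row-stochastic, and let M ∈ ℝ^{D×D} be positive semidefinite. Then ||(I − γP)^{-1} M (I − γP)^{-⊤}||_diag ≤ ||M||_diag/(1−γ)²; equivalently, ||(I − γP)^{-1} M (I − γP)^{-⊤}||_diag^{1/2} ≤ ||M||_diag^{1/2}/(1−γ). -/

import Mathlib

/-!
Write `Q = (I - γP)⁻¹` and let `q` be its `i`-th row. The `i`-th diagonal entry of `Q M Qᵀ` is
`qᵀ M q`, which is at most `max_{j,k} |M_jk| · ‖q‖₁²`. For positive semidefinite `M` the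
largest entry in absolute value sits on the diagonal, since `|M_jk| ≤ (M_jj + M_kk) / 2`.
Finally `‖q‖₁` is bounded by the max-row-sum norm of `Q`, and the Neumann series gives
`‖Q‖_∞ ≤ 1 / (1 - ‖γP‖_∞) = 1 / (1 - γ)` because a row-stochastic matrix has norm at most one.
-/

open Finset Matrix

noncomputable section

/-- A matrix is row-stochastic if its entries are nonnegative and its rows sum to one. -/
def RowStochastic {D : ℕ} (P : Matrix (Fin D) (Fin D) ℝ) : Prop :=
  (∀ i j, 0 ≤ P i j) ∧ (∀ i, ∑ j, P i j = 1)

/-- `‖A‖_diag`: the maximum absolute diagonal entry of a square matrix. -/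
def diagNorm {D : ℕ} (A : Matrix (Fin D) (Fin D) ℝ) : ℝ := ⨆ i, |A i i|

lemma abs_apply_self_le_diagNorm {D : ℕ} (A : Matrix (Fin D) (Fin D) ℝ) (i : Fin D) :
    |A i i| ≤ diagNorm A :=
  le_ciSup (f := fun i => |A i i|) (Set.finite_range _).bddAbove i

lemma diagNorm_le {D : ℕ} {A : Matrix (Fin D) (Fin D) ℝ} {c : ℝ} (hc : 0 ≤ c)
    (h : ∀ i, |A i i| ≤ c) : diagNorm A ≤ c :=
  Real.iSup_le h hc

lemma diagNorm_nonneg {D : ℕ} (A : Matrix (Fin D) (Fin D) ℝ) : 0 ≤ diagNorm A :=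
  Real.iSup_nonneg fun _ => abs_nonneg _

namespace Matrix

variable {m n : Type*} [Fintype n]

lemma PosSemidef.abs_apply_le_half_add {M : Matrix n n ℝ} (hM : M.PosSemidef) (j k : n) :
    |M j k| ≤ (M j j + M k k) / 2 := by
  classical
  have hsymm : M k j = M j k := by simpa using hM.isHermitian.apply j k
  have hquad : ∀ s : ℝ, 0 ≤ M j j + 2 * s * M j k + s ^ 2 * M k k := fun s => by
    have := hM.dotProduct_mulVec_nonneg (Pi.single j 1 + s • Pi.single k 1)
    simp only [star_trivial, mulVec_add, mulVec_smul, mulVec_single_one, dotProduct_add,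
      add_dotProduct, smul_dotProduct, dotProduct_smul, single_one_dotProduct, col_apply,
      smul_eq_mul, hsymm] at this
    linarith
  rw [abs_le]
  constructor <;> nlinarith [hquad 1, hquad (-1)]

lemma abs_mul_mul_transpose_apply_self_le (B : Matrix m n ℝ) {M : Matrix n n ℝ} {c : ℝ}
    (hM : ∀ j k, |M j k| ≤ c) (i : m) : |(B * M * Bᵀ) i i| ≤ c * (∑ j, |B i j|) ^ 2 := by
  calc |(B * M * Bᵀ) i i| = |∑ k, ∑ j, B i j * M j k * B i k| := by
        simp only [mul_apply, transpose_apply, sum_mul]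
    _ ≤ ∑ k, ∑ j, |B i j| * c * |B i k| := by
        refine (abs_sum_le_sum_abs _ _).trans (sum_le_sum fun k _ => ?_)
        refine (abs_sum_le_sum_abs _ _).trans (sum_le_sum fun j _ => ?_)
        rw [abs_mul, abs_mul]
        gcongr
        exact hM j k
    _ = c * (∑ j, |B i j|) ^ 2 := by
        simp_rw [sq, sum_mul_sum, mul_sum]
        rw [sum_comm]
        exact sum_congr rfl fun j _ => sum_congr rfl fun k _ => by ring


end Matrix

section LinftyOpNorm

attribute [local instance] Matrix.linftyOpNormedAddCommGroup Matrix.linftyOpNormedRing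
  Matrix.linftyOpNormedSpace

namespace Matrix

variable {m n : Type*} [Fintype m] [Fintype n]

lemma sum_abs_apply_le_linfty_opNorm (A : Matrix m n ℝ) (i : m) : ∑ j, |A i j| ≤ ‖A‖ := by
  rw [linfty_opNorm_def]
  have := NNReal.coe_le_coe.2 (le_sup (f := fun i => ∑ j, ‖A i j‖₊) (mem_univ i))
  simpa only [NNReal.coe_sum, coe_nnnorm, Real.norm_eq_abs] using this

lemma linfty_opNorm_inv_one_sub_le [DecidableEq n] {A : Matrix n n ℝ} (hA : ‖A‖ < 1) :
    ‖(1 - A)⁻¹‖ ≤ (1 - ‖A‖)⁻¹ := by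
  have hone : ‖(1 : Matrix n n ℝ)‖ ≤ 1 := by
    rw [← diagonal_one, linfty_opNorm_diagonal]
    exact (pi_norm_le_iff_of_nonneg zero_le_one).2 fun _ => norm_one.le
  rw [inv_eq_left_inv (geom_series_mul_neg A hA)]
  linarith [tsum_geometric_le_of_norm_lt_one A hA]

end Matrix

namespace RowStochastic

variable {D : ℕ} {P : Matrix (Fin D) (Fin D) ℝ}

lemma linfty_opNorm_le_one (hP : RowStochastic P) : ‖P‖ ≤ 1 := by
  rw [linfty_opNorm_def, NNReal.coe_le_one]
  refine Finset.sup_le fun i _ => ?_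
  rw [← NNReal.coe_le_coe, NNReal.coe_sum, NNReal.coe_one]
  simp only [coe_nnnorm, Real.norm_of_nonneg (hP.1 i _), hP.2 i, le_refl]

lemma sum_abs_inv_one_sub_smul_le (hP : RowStochastic P) {γ : ℝ} (hγ0 : 0 ≤ γ) (hγ1 : γ < 1)
    (i : Fin D) : ∑ j, |(1 - γ • P)⁻¹ i j| ≤ (1 - γ)⁻¹ := by
  have hγP : ‖γ • P‖ ≤ γ := by
    calc ‖γ • P‖ ≤ ‖γ‖ * ‖P‖ := norm_smul_le _ _
      _ ≤ γ * 1 := by rw [Real.norm_of_nonneg hγ0]; gcongr; exact hP.linfty_opNorm_le_one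
      _ = γ := mul_one γ
  calc ∑ j, |(1 - γ • P)⁻¹ i j| ≤ ‖(1 - γ • P)⁻¹‖ := sum_abs_apply_le_linfty_opNorm _ i
    _ ≤ (1 - ‖γ • P‖)⁻¹ := linfty_opNorm_inv_one_sub_le (hγP.trans_lt hγ1)
    _ ≤ (1 - γ)⁻¹ := by gcongr

end RowStochastic

end LinftyOpNorm

lemma Matrix.PosSemidef.abs_apply_le_diagNorm {D : ℕ} {M : Matrix (Fin D) (Fin D) ℝ}
    (hM : M.PosSemidef) (j k : Fin D) : |M j k| ≤ diagNorm M := by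
  have hj := (le_abs_self _).trans (abs_apply_self_le_diagNorm M j)
  have hk := (le_abs_self _).trans (abs_apply_self_le_diagNorm M k)
  linarith [hM.abs_apply_le_half_add j k]

/-- **Lemma (Statement 13).** For `γ ∈ (0,1)`, `P` row-stochastic, and `M` PSD,
`‖(I - γP)⁻¹ M (I - γP)⁻ᵀ‖_diag ≤ ‖M‖_diag/(1-γ)²`, and equivalently for square roots. -/
theorem diag_norm_sandwich_bound
    {D : ℕ} (γ : ℝ) (hγ : γ ∈ Set.Ioo (0 : ℝ) 1)
    (P : Matrix (Fin D) (Fin D) ℝ) (hP : RowStochastic P)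
    (M : Matrix (Fin D) (Fin D) ℝ) (hM : M.PosSemidef) :
    diagNorm ((1 - γ • P)⁻¹ * M * ((1 - γ • P)⁻¹)ᵀ) ≤ diagNorm M / (1 - γ) ^ 2 ∧
      Real.sqrt (diagNorm ((1 - γ • P)⁻¹ * M * ((1 - γ • P)⁻¹)ᵀ)) ≤
        Real.sqrt (diagNorm M) / (1 - γ) := by
  obtain ⟨hγ0, hγ1⟩ := hγ
  have hdM := diagNorm_nonneg M
  have hbound : diagNorm ((1 - γ • P)⁻¹ * M * ((1 - γ • P)⁻¹)ᵀ) ≤ diagNorm M / (1 - γ) ^ 2 := by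
    refine diagNorm_le (by positivity) fun i => ?_
    calc _ ≤ diagNorm M * (∑ j, |(1 - γ • P)⁻¹ i j|) ^ 2 :=
          abs_mul_mul_transpose_apply_self_le _ hM.abs_apply_le_diagNorm i
      _ ≤ diagNorm M * ((1 - γ)⁻¹) ^ 2 := by
          gcongr
          exact hP.sum_abs_inv_one_sub_smul_le hγ0.le hγ1 i
      _ = diagNorm M / (1 - γ) ^ 2 := by rw [inv_pow, div_eq_mul_inv]
  refine ⟨hbound, ?_⟩
  rw [← Real.sqrt_sq (sub_nonneg.2 hγ1.le), ← Real.sqrt_div' _ (sq_nonneg _)]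
  exact Real.sqrt_le_sqrt hbound

end
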